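/- Split conformal lower coverage bound: Let s_1, ..., s_n, s_{n+1} be exchangeable real-valued random variables (the nonconformity scores of the calibration points and the test point). Let τ be the ⌈(n+1)(1−α)⌉-th smallest value among s_1, ..., s_n (assume ⌈(n+1)(1−α)⌉ ≤ n). Then P(s_{n+1} ≤ τ) ≥ 1 − α. -/
import Mathlib

open MeasureTheory Finset
open scoped ENNReal

lemma card_filter_comp_perm {m : ℕ} (σ : Equiv.Perm (Fin m)) (p : Fin m → Prop)
    [DecidablePred p] :
    (univ.filter fun j => p (σ j)).card = (univ.filter p).card := by
  apply Finset.card_bij (fun j _ => σ j)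
  · intro a ha; simp only [mem_filter, mem_univ, true_and] at ha ⊢; exact ha
  · intro a _ b _ h; exact σ.injective h
  · intro b hb; exact ⟨σ.symm b, by simpa using (by simpa using hb : p b), by simp⟩

lemma rank_lt_imp_le_sorted {n k : ℕ} (hk1 : 1 ≤ k) (hkn : k ≤ n) (g : Fin n → ℝ) (t : ℝ)
    (h : (univ.filter fun j => g j < t).card < k) :
    t ≤ g (Tuple.sort g ⟨k - 1, by omega⟩) := by
  by_contra h'
  push_neg at h'
  set σ := Tuple.sort g
  have hsub : (univ.image fun r : Fin k => σ (Fin.castLE hkn r)) ⊆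
      (univ.filter fun j => g j < t) := by
    intro j hj
    simp only [mem_image, mem_univ, true_and] at hj
    obtain ⟨r, rfl⟩ := hj
    simp only [mem_filter, mem_univ, true_and]
    calc g (σ (Fin.castLE hkn r)) ≤ g (σ ⟨k - 1, by omega⟩) := by
          apply Tuple.monotone_sort g
          exact Fin.mk_le_mk.mpr (by omega)
      _ < t := h'
  have hcard : (univ.image fun r : Fin k => σ (Fin.castLE hkn r)).card = k := by
    rw [Finset.card_image_of_injective _ (fun a b hab => Fin.castLE_injective hkn (σ.injective hab))]
    simp
  have := Finset.card_le_card hsub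
  omega

lemma rank_count {m k : ℕ} (hkm : k ≤ m) (g : Fin m → ℝ) :
    k ≤ (univ.filter fun i : Fin m =>
      (univ.filter fun j => g j < g i).card < k).card := by
  set σ := Tuple.sort g
  have hsub : (univ.image fun r : Fin k => σ (Fin.castLE hkm r)) ⊆
      (univ.filter fun i : Fin m => (univ.filter fun j => g j < g i).card < k) := by
    intro i hi
    simp only [mem_image, mem_univ, true_and] at hi
    obtain ⟨r, rfl⟩ := hi
    simp only [mem_filter, mem_univ, true_and]
    rw [← card_filter_comp_perm σ (fun j => g j < g (σ (Fin.castLE hkm r)))]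
    have hsub2 : (univ.filter fun p => g (σ p) < g (σ (Fin.castLE hkm r))) ⊆
        Finset.Iio (Fin.castLE hkm r) := by
      intro p hp
      simp only [mem_filter, mem_univ, true_and] at hp
      rw [Finset.mem_Iio]
      by_contra hge
      push_neg at hge
      exact absurd (Tuple.monotone_sort g hge) (not_le.mpr hp)
    have := Finset.card_le_card hsub2
    rw [Fin.card_Iio] at this
    have : ((Fin.castLE hkm r : Fin m) : ℕ) < k := r.isLt
    omega
  have hcard : (univ.image fun r : Fin k => σ (Fin.castLE hkm r)).card = k := by
    rw [Finset.card_image_of_injective _ (fun a b hab => Fin.castLE_injective hkm (σ.injective hab))]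
    simp
  have := Finset.card_le_card hsub
  omega

/-- Split conformal lower coverage bound: for exchangeable scores `s₁,…,sₙ,s_{n+1}` and `τ`
the `⌈(n+1)(1−α)⌉`-th smallest among `s₁,…,sₙ`, we have `P(s_{n+1} ≤ τ) ≥ 1 − α`. -/
theorem split_conformal_lower_coverage
    {Ω : Type*} [MeasurableSpace Ω] (P : Measure Ω) [IsProbabilityMeasure P]
    (n : ℕ) (α : ℝ) (hα : α ∈ Set.Ioo (0 : ℝ) 1)
    (s : Fin (n + 1) → Ω → ℝ) (hmeas : ∀ i, Measurable (s i))
    (hexch : ∀ π : Equiv.Perm (Fin (n + 1)),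
      P.map (fun ω => fun i => s (π i) ω) = P.map (fun ω => fun i => s i ω))
    (k : ℕ) (hk : k = ⌈((n : ℝ) + 1) * (1 - α)⌉₊) (hk1 : 1 ≤ k) (hkn : k ≤ n)
    (τ : Ω → ℝ)
    (hτ : ∀ ω, τ ω = (fun g : Fin n → ℝ => g (Tuple.sort g ⟨k - 1, by omega⟩))
      (fun i : Fin n => s i.castSucc ω)) :
    ENNReal.ofReal (1 - α) ≤ P {ω | s (Fin.last n) ω ≤ τ ω} := by
  classical
  -- the events A i
  set A : Fin (n + 1) → Set Ω := fun i =>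
    {ω | (univ.filter fun j => s j ω < s i ω).card < k} with hA
  -- measurability of the count functions
  have hcount_meas : ∀ i : Fin (n + 1),
      Measurable (fun ω => (univ.filter fun j => s j ω < s i ω).card) := by
    intro i
    have : (fun ω => (univ.filter fun j => s j ω < s i ω).card)
        = fun ω => ∑ j : Fin (n + 1), if s j ω < s i ω then 1 else 0 := by
      funext ω; rw [Finset.card_filter]
    rw [this]
    exact Finset.measurable_sum _ fun j _ =>
      Measurable.ite (measurableSet_lt (hmeas j) (hmeas i)) measurable_const
        measurable_const
  have hAmeas : ∀ i, MeasurableSet (A i) := fun i =>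
    (hcount_meas i) (measurableSet_lt measurable_id measurable_const :
      MeasurableSet {m : ℕ | m < k})
  -- the sets S i in the sample space of score vectors
  set S : Fin (n + 1) → Set (Fin (n + 1) → ℝ) := fun i =>
    {g | (univ.filter fun j => g j < g i).card < k} with hS
  have hScount_meas : ∀ i : Fin (n + 1),
      Measurable (fun g : Fin (n + 1) → ℝ => (univ.filter fun j => g j < g i).card) := by
    intro i
    have : (fun g : Fin (n + 1) → ℝ => (univ.filter fun j => g j < g i).card)
        = fun g => ∑ j : Fin (n + 1), if g j < g i then 1 else 0 := by
      funext g; rw [Finset.card_filter]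
    rw [this]
    exact Finset.measurable_sum _ fun j _ =>
      Measurable.ite (measurableSet_lt (measurable_pi_apply j) (measurable_pi_apply i))
        measurable_const measurable_const
  have hSmeas : ∀ i, MeasurableSet (S i) := fun i =>
    (hScount_meas i) (measurableSet_lt measurable_id measurable_const :
      MeasurableSet {m : ℕ | m < k})
  have hTmeas : Measurable (fun ω => fun i => s i ω) :=
    measurable_pi_lambda _ fun i => hmeas i
  -- exchangeability gives equal probabilities
  have hPA : ∀ i : Fin (n + 1), P (A i) = P (A (Fin.last n)) := by
    intro i
    set π := Equiv.swap i (Fin.last n) with hπ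
    have hπmeas : Measurable (fun ω => fun j => s (π j) ω) :=
      measurable_pi_lambda _ fun j => hmeas (π j)
    have := congrArg (fun μ : Measure (Fin (n + 1) → ℝ) => μ (S (Fin.last n))) (hexch π)
    rw [Measure.map_apply hπmeas (hSmeas _), Measure.map_apply hTmeas (hSmeas _)] at this
    have h1 : (fun ω => fun j => s (π j) ω) ⁻¹' S (Fin.last n) = A i := by
      ext ω
      simp only [Set.mem_preimage, hS, Set.mem_setOf_eq, hA]
      rw [card_filter_comp_perm π (fun j => s j ω < s (π (Fin.last n)) ω)]
      have : π (Fin.last n) = i := Equiv.swap_apply_right i (Fin.last n)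
      rw [this]
    have h2 : (fun ω => fun j => s j ω) ⁻¹' S (Fin.last n) = A (Fin.last n) := rfl
    rw [h1, h2] at this
    exact this
  -- event inclusion for the last coordinate
  have hincl : A (Fin.last n) ⊆ {ω | s (Fin.last n) ω ≤ τ ω} := by
    intro ω hω
    simp only [hA, Set.mem_setOf_eq] at hω
    have hcc : (univ.filter fun j : Fin n => s j.castSucc ω < s (Fin.last n) ω).card < k := by
      have : (univ.filter fun j : Fin (n + 1) => s j ω < s (Fin.last n) ω).card
          = (univ.filter fun j : Fin n => s j.castSucc ω < s (Fin.last n) ω).card := by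
        rw [Finset.card_filter, Finset.card_filter, Fin.sum_univ_castSucc]
        simp
      omega
    rw [Set.mem_setOf_eq, hτ ω]
    exact rank_lt_imp_le_sorted hk1 hkn _ _ hcc
  -- counting bound: for every ω at least k of the events hold
  have hcount : ∀ ω, k ≤ (univ.filter fun i : Fin (n + 1) => ω ∈ A i).card := by
    intro ω
    have := rank_count (m := n + 1) (k := k) (by omega) (fun i => s i ω)
    simpa [hA] using this
  -- integrate
  have hsum : (k : ℝ≥0∞) ≤ ∑ i : Fin (n + 1), P (A i) := by
    have h1 : (k : ℝ≥0∞) = ∫⁻ _, (k : ℝ≥0∞) ∂P := by simp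
    rw [h1]
    have h2 : ∀ i : Fin (n + 1), P (A i) = ∫⁻ ω, (A i).indicator (fun _ => 1) ω ∂P := by
      intro i; rw [lintegral_indicator (hAmeas i)]; simp
    calc ∫⁻ _, (k : ℝ≥0∞) ∂P
        ≤ ∫⁻ ω, ∑ i : Fin (n + 1), (A i).indicator (fun _ => 1) ω ∂P := by
          apply lintegral_mono
          intro ω
          show (k : ℝ≥0∞) ≤ ∑ i : Fin (n + 1), (A i).indicator (fun _ => 1) ω
          have hω := hcount ω
          have : ∑ i : Fin (n + 1), (A i).indicator (fun _ => (1 : ℝ≥0∞)) ω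
              = ((univ.filter fun i : Fin (n + 1) => ω ∈ A i).card : ℝ≥0∞) := by
            rw [Finset.card_filter]
            push_cast
            congr 1
            funext i
            simp [Set.indicator_apply]
          rw [this]
          exact_mod_cast Nat.cast_le.mpr hω
      _ = ∑ i : Fin (n + 1), P (A i) := by
          rw [lintegral_finset_sum]
          · exact Finset.sum_congr rfl fun i _ => (h2 i).symm
          · intro i _
            exact (measurable_const.indicator (hAmeas i))
  have hsum2 : (k : ℝ≥0∞) ≤ (n + 1) * P (A (Fin.last n)) := by
    calc (k : ℝ≥0∞) ≤ ∑ i : Fin (n + 1), P (A i) := hsum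
      _ = ∑ _i : Fin (n + 1), P (A (Fin.last n)) := Finset.sum_congr rfl fun i _ => hPA i
      _ = (n + 1) * P (A (Fin.last n)) := by
          rw [Finset.sum_const, Finset.card_univ, Fintype.card_fin, nsmul_eq_mul]
          push_cast
          ring
  -- arithmetic
  have hreal : ((n : ℝ) + 1) * (1 - α) ≤ k := by
    rw [hk]
    exact Nat.le_ceil _
  have h1α : (0 : ℝ) ≤ 1 - α := by linarith [hα.2]
  have hofk : ENNReal.ofReal (1 - α) * (n + 1) ≤ (k : ℝ≥0∞) := by
    have : ENNReal.ofReal (1 - α) * (n + 1) = ENNReal.ofReal ((1 - α) * ((n : ℝ) + 1)) := by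
      rw [ENNReal.ofReal_mul h1α]
      congr 1
      rw [ENNReal.ofReal_add (by positivity) zero_le_one]
      simp [ENNReal.ofReal_natCast]
    rw [this]
    calc ENNReal.ofReal ((1 - α) * ((n : ℝ) + 1))
        ≤ ENNReal.ofReal (k : ℝ) := ENNReal.ofReal_le_ofReal (by linarith [hreal])
      _ = (k : ℝ≥0∞) := ENNReal.ofReal_natCast k
  have hfin : ENNReal.ofReal (1 - α) ≤ P (A (Fin.last n)) := by
    have hne : ((n : ℝ≥0∞) + 1) ≠ 0 := by simp
    have hnt : ((n : ℝ≥0∞) + 1) ≠ ⊤ := by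
      simp [ENNReal.add_ne_top]
    rw [← ENNReal.mul_le_mul_iff_right hne hnt]
    calc ((n : ℝ≥0∞) + 1) * ENNReal.ofReal (1 - α)
        = ENNReal.ofReal (1 - α) * ((n : ℝ≥0∞) + 1) := mul_comm _ _
      _ ≤ (k : ℝ≥0∞) := hofk
      _ ≤ ((n : ℝ≥0∞) + 1) * P (A (Fin.last n)) := hsum2
  exact hfin.trans (measure_mono hincl)
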